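/- arXiv:2212.12117 — 7 statements merged into one kernel-verified Lean document; each statement's English description precedes it below -/
import Mathlib

section
/- Let V be a finite subset of F_2^r of odd cardinality and let A = Σ_{v ∈ V} Γ_v. Then A² = I (the identity matrix), and consequently the rank of A over F_2 equals 2^r. -/
/-- `Γ_v` : the permutation matrix over `F₂` indexed by `F₂^r` with
`(Γ_v)_{u,w} = 1` iff `u + w = v`. -/
def Gamma {r : ℕ} (v : Fin r → ZMod 2) :
    Matrix (Fin r → ZMod 2) (Fin r → ZMod 2) (ZMod 2) :=
  Matrix.of fun u w => if u + w = v then 1 else 0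

/-!
The matrices `Γ_v` are the permutation matrices of the translations `u ↦ v + u` of `F₂^r`, so
`v ↦ Γ_v` is a homomorphism from an elementary abelian `2`-group: the `Γ_v` commute and square to
the identity. In characteristic `2` squaring is additive on commuting elements, hence
`A² = ∑_{v ∈ V} Γ_v² = |V| • 1 = 1` for `|V|` odd, and an involution is invertible.
-/

theorem sum_pow_char_of_commute {R ι : Type*} [Semiring R] (p : ℕ) [Fact p.Prime] [CharP R p]
    (s : Finset ι) (f : ι → R) (hf : ∀ i ∈ s, ∀ j ∈ s, Commute (f i) (f j)) :
    (∑ i ∈ s, f i) ^ p = ∑ i ∈ s, f i ^ p := by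
  classical
  induction s using Finset.induction_on with
  | empty => simp [(Fact.out : p.Prime).ne_zero]
  | insert a s ha ih =>
    have hcomm : Commute (f a) (∑ i ∈ s, f i) :=
      Commute.sum_right _ _ _ fun j hj =>
        hf a (Finset.mem_insert_self a s) j (Finset.mem_insert_of_mem hj)
    rw [Finset.sum_insert ha, Finset.sum_insert ha, add_pow_char_of_commute p hcomm,
      ih fun i hi j hj => hf i (Finset.mem_insert_of_mem hi) j (Finset.mem_insert_of_mem hj)]

section Gamma

variable {r : ℕ}

theorem Gamma_eq_permMatrix (v : Fin r → ZMod 2) :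
    Gamma v = (Equiv.addLeft v).permMatrix (ZMod 2) := by
  ext u w
  have hmem : w ∈ (Equiv.addLeft v).toPEquiv u ↔ u + w = v := by
    rw [Equiv.toPEquiv_apply, Option.mem_some_iff, Equiv.coe_addLeft, ← sub_eq_zero,
      ← sub_eq_zero (a := u + w), ZModModule.sub_eq_add, ZModModule.sub_eq_add,
      add_comm (u + w) v, add_assoc]
  simp only [Gamma, Matrix.of_apply, PEquiv.toMatrix_apply, hmem]

theorem Gamma_add (v w : Fin r → ZMod 2) : Gamma (v + w) = Gamma v * Gamma w := by
  rw [Gamma_eq_permMatrix, Gamma_eq_permMatrix, Gamma_eq_permMatrix, add_comm, Equiv.addLeft_add,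
    Matrix.permMatrix_mul]

theorem Gamma_zero : Gamma (0 : Fin r → ZMod 2) = 1 := by
  rw [Gamma_eq_permMatrix, Equiv.addLeft_zero, Matrix.permMatrix_one]

theorem Gamma_sq (v : Fin r → ZMod 2) : Gamma v ^ 2 = 1 := by
  rw [sq, ← Gamma_add, ZModModule.add_self, Gamma_zero]

theorem Gamma_commute (v w : Fin r → ZMod 2) : Commute (Gamma v) (Gamma w) := by
  rw [Commute, SemiconjBy, ← Gamma_add, ← Gamma_add, add_comm]

theorem sum_Gamma_sq (V : Finset (Fin r → ZMod 2)) :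
    (∑ v ∈ V, Gamma v) ^ 2 = (V.card : Matrix (Fin r → ZMod 2) (Fin r → ZMod 2) (ZMod 2)) := by
  rw [sum_pow_char_of_commute 2 V Gamma fun v _ w _ => Gamma_commute v w]
  simp only [Gamma_sq, Finset.sum_const, nsmul_one]

end Gamma

theorem odd_sum_sq_eq_one_and_full_rank (r : ℕ) (V : Finset (Fin r → ZMod 2))
    (hV : Odd V.card)
    (A : Matrix (Fin r → ZMod 2) (Fin r → ZMod 2) (ZMod 2))
    (hA : A = ∑ v ∈ V, Gamma v) :
    A ^ 2 = 1 ∧ A.rank = 2 ^ r := by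
  have hsq : A ^ 2 = 1 := by
    rw [hA, sum_Gamma_sq]
    exact natCast_eq_one_of_odd_of_two_eq_zero hV CharTwo.two_eq_zero
  refine ⟨hsq, ?_⟩
  rw [Matrix.rank_of_isUnit A (IsUnit.of_pow_eq_one hsq two_ne_zero)]
  simp
end

section
/- Let t ≥ 2, let V_1, …, V_t and W be finite subsets of F_2^r with W of odd cardinality, and set A_i = Σ_{v ∈ V_i} Γ_v for each i and B = Σ_{w ∈ W} Γ_w. Let D be the horizontal concatenation (A_1 | A_2 | … | A_t), i.e., the matrix with rows indexed by F_2^r and columns indexed by pairs (i, y) with 1 ≤ i ≤ t and y ∈ F_2^r, whose entry at (x, (i, y)) is (A_i)_{x,y}, and let D' be the analogous concatenation (A_1 B | A_2 B | … | A_t B). Then the F_2-linear span of the set of rows of D equals the F_2-linear span of the set of rows of D'. -/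
lemma aux_add_self {r : ℕ} (a : Fin r → ZMod 2) : a + a = 0 := by
  funext i
  exact CharTwo.add_self_eq_zero _

lemma aux_add_eq_iff {r : ℕ} (a b c : Fin r → ZMod 2) : a + b = c ↔ b = a + c := by
  constructor
  · rintro rfl; rw [← add_assoc, aux_add_self, zero_add]
  · rintro rfl; rw [← add_assoc, aux_add_self, zero_add]

lemma aux_z1 : ∀ a b c : ZMod 2, a + (b + (a + c)) = b + c := by decide

lemma aux_z2 : ∀ a b c : ZMod 2, b + (a + c) + c = a + b := by decide

lemma Gamma_mul {r : ℕ} (v w : Fin r → ZMod 2) : Gamma v * Gamma w = Gamma (v + w) := by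
  ext u y
  simp only [Matrix.mul_apply, Gamma, Matrix.of_apply, ite_mul, one_mul, zero_mul]
  have h1 : ∀ z : Fin r → ZMod 2, u + z = v ↔ z = u + v := fun z => aux_add_eq_iff u z v
  simp only [h1]
  rw [Finset.sum_ite_eq' Finset.univ (u + v) (fun z => if z + y = w then (1 : ZMod 2) else 0)]
  simp only [Finset.mem_univ, if_true]
  have hc : u + v + y = w ↔ u + y = v + w := by
    rw [aux_add_eq_iff, aux_add_eq_iff, add_assoc]
  simp only [hc]

theorem rowSpan_concat_eq (r t : ℕ) (ht : 2 ≤ t)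
    (V : Fin t → Finset (Fin r → ZMod 2))
    (W : Finset (Fin r → ZMod 2)) (hW : Odd W.card)
    (A : Fin t → Matrix (Fin r → ZMod 2) (Fin r → ZMod 2) (ZMod 2))
    (hA : ∀ i, A i = ∑ v ∈ V i, Gamma v)
    (B : Matrix (Fin r → ZMod 2) (Fin r → ZMod 2) (ZMod 2))
    (hB : B = ∑ w ∈ W, Gamma w)
    (D D' : Matrix (Fin r → ZMod 2) (Fin t × (Fin r → ZMod 2)) (ZMod 2))
    (hD : ∀ x i y, D x (i, y) = A i x y)
    (hD' : ∀ x i y, D' x (i, y) = (A i * B) x y) :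
    Submodule.span (ZMod 2) (Set.range D) = Submodule.span (ZMod 2) (Set.range D') := by
  classical
  have hBent : ∀ u z, B u z = if u + z ∈ W then 1 else 0 := by
    intro u z
    rw [hB]
    simp only [Matrix.sum_apply, Gamma, Matrix.of_apply]
    rw [Finset.sum_ite_eq W (u + z) (fun _ => (1 : ZMod 2))]
  -- B * B = 1
  have hBB : B * B = 1 := by
    ext u y
    rw [Matrix.mul_apply, Matrix.one_apply]
    simp only [hBent]
    by_cases huy : u = y
    · subst huy
      rw [if_pos rfl]
      have hz : ∀ z : Fin r → ZMod 2,
          (if u + z ∈ W then (1 : ZMod 2) else 0) * (if z + u ∈ W then 1 else 0)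
            = if u + z ∈ W then 1 else 0 := by
        intro z
        rw [add_comm z u]
        by_cases h : u + z ∈ W <;> simp [h]
      rw [Finset.sum_congr rfl fun z _ => hz z, Finset.sum_boole]
      have hcard : (Finset.univ.filter (fun z => u + z ∈ W)).card = W.card := by
        apply Finset.card_bij (fun z _ => u + z)
        · intro z hz'
          simpa using hz'
        · intro z1 h1 z2 h2 h
          exact add_left_cancel h
        · intro w hw
          refine ⟨u + w, ?_, ?_⟩
          · simp only [Finset.mem_filter, Finset.mem_univ, true_and]
            rwa [← add_assoc, aux_add_self, zero_add]
          · rw [← add_assoc, aux_add_self, zero_add]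
      rw [hcard]
      obtain ⟨k, hk⟩ := hW
      rw [hk]
      push_cast
      have h2 : (2 : ZMod 2) = 0 := by decide
      rw [h2, zero_mul, zero_add]
    · rw [if_neg huy]
      refine Finset.sum_ninvolution (fun z => z + (u + y)) ?_ ?_ (fun _ => Finset.mem_univ _) ?_
      · intro z
        have h1 : u + (z + (u + y)) = z + y := by
          funext i
          simp only [Pi.add_apply]
          exact aux_z1 (u i) (z i) (y i)
        have h2 : z + (u + y) + y = u + z := by
          funext i
          simp only [Pi.add_apply]
          exact aux_z2 (u i) (z i) (y i)
        simp only [h1, h2]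
        by_cases ha : u + z ∈ W <;> by_cases hb : z + y ∈ W <;> simp [ha, hb] <;> decide
      · intro z _
        intro h
        apply huy
        have h0 : u + y = 0 := by
          nth_rewrite 2 [← add_zero z] at h
          exact add_left_cancel h
        have : u = (u + y) + y := by rw [add_assoc, aux_add_self, add_zero]
        rw [h0, zero_add] at this
        exact this
      · intro z
        show z + (u + y) + (u + y) = z
        rw [add_assoc, aux_add_self, add_zero]
  have hcomm : ∀ i, A i * B = B * A i := by
    intro i
    rw [hA, hB, Finset.sum_mul_sum, Finset.sum_mul_sum]
    rw [Finset.sum_comm]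
    refine Finset.sum_congr rfl fun w _ => Finset.sum_congr rfl fun v _ => ?_
    rw [Gamma_mul, Gamma_mul, add_comm]
  have key1 : ∀ x, D' x = ∑ z, B x z • D z := by
    intro x
    funext p
    obtain ⟨i, y⟩ := p
    rw [hD', hcomm, Matrix.mul_apply, Finset.sum_apply]
    refine Finset.sum_congr rfl fun z _ => ?_
    rw [Pi.smul_apply, smul_eq_mul, hD]
  have key2 : ∀ x, D x = ∑ z, B x z • D' z := by
    intro x
    funext p
    obtain ⟨i, y⟩ := p
    have h : A i x y = (B * (A i * B)) x y := by
      rw [← Matrix.mul_assoc, ← hcomm, Matrix.mul_assoc, hBB, Matrix.mul_one]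
    rw [hD, h, Matrix.mul_apply, Finset.sum_apply]
    refine Finset.sum_congr rfl fun z _ => ?_
    rw [Pi.smul_apply, smul_eq_mul, hD']
  apply le_antisymm
  · rw [Submodule.span_le]
    rintro _ ⟨x, rfl⟩
    rw [key2 x]
    exact Submodule.sum_mem _ fun z _ =>
      Submodule.smul_mem _ _ (Submodule.subset_span ⟨z, rfl⟩)
  · rw [Submodule.span_le]
    rintro _ ⟨x, rfl⟩
    rw [key1 x]
    exact Submodule.sum_mem _ fun z _ =>
      Submodule.smul_mem _ _ (Submodule.subset_span ⟨z, rfl⟩)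
end

section
/- Let r ≥ 1 and m ≥ 1, and let S = {(v, 0_m) : v ∈ F_2^r, v ≠ 0} ⊆ F_2^r × F_2^m (the set of columns of the parity-check matrix of the binary Hamming code of length 2^r − 1 extended by m zero rows). Let A be the matrix over F_2 with rows and columns indexed by F_2^r × F_2^m, with A_{(u,x),(w,y)} = 1 if (u + w, x + y) ∈ S and 0 otherwise, and let I be the identity matrix of the same size. Then the rank of A + I over F_2 equals 2^m. -/
theorem rank_hamming_zero_extended (r m : ℕ) (hr : 1 ≤ r) (hm : 1 ≤ m)
    (A : Matrix ((Fin r → ZMod 2) × (Fin m → ZMod 2))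
         ((Fin r → ZMod 2) × (Fin m → ZMod 2)) (ZMod 2))
    (hA : ∀ p q, A p q = if p.1 + q.1 ≠ 0 ∧ p.2 + q.2 = 0 then 1 else 0) :
    (A + 1).rank = 2 ^ m := by
  -- entrywise description of A + 1
  have hM : ∀ p q, (A + 1) p q = if p.2 = q.2 then 1 else 0 := by
    intro p q
    have key : ∀ {n : ℕ} (x y : Fin n → ZMod 2), x + y = 0 ↔ x = y := by
      intro n x y
      have hsub : x - y = x + y := funext fun i => CharTwo.sub_eq_add _ _
      rw [← hsub, sub_eq_zero]
    have h1 : p.1 + q.1 = 0 ↔ p.1 = q.1 := key _ _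
    have h2 : p.2 + q.2 = 0 ↔ p.2 = q.2 := key _ _
    have hone : (1 : Matrix _ _ (ZMod 2)) p q = if p = q then 1 else 0 :=
      Matrix.one_apply
    simp only [Matrix.add_apply, hA, hone, Prod.ext_iff, h2]
    by_cases hs : p.2 = q.2 <;> by_cases hf : p.1 = q.1 <;>
      simp [hs, hf, h1, (key q.1 q.1).mpr rfl]
  classical
  let ι : ((Fin m → ZMod 2) → ZMod 2) →ₗ[ZMod 2]
      ((Fin r → ZMod 2) × (Fin m → ZMod 2)) → ZMod 2 :=
    LinearMap.funLeft (ZMod 2) (ZMod 2) Prod.snd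
  have hinj : Function.Injective ι :=
    LinearMap.funLeft_injective_of_surjective _ _ _ Prod.snd_surjective
  have hrange : LinearMap.range (A + 1).mulVecLin = LinearMap.range ι := by
    apply le_antisymm
    · rintro _ ⟨v, rfl⟩
      refine ⟨fun y => ∑ u : Fin r → ZMod 2, v (u, y), ?_⟩
      funext p
      simp only [ι, LinearMap.funLeft_apply, Function.comp]
      rw [Matrix.mulVecLin_apply, Matrix.mulVec, dotProduct]
      rw [Fintype.sum_prod_type]
      refine Finset.sum_congr rfl fun u _ => ?_
      rw [Finset.sum_eq_single p.2]
      · simp [hM]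
      · intro y _ hy
        simp [hM, Ne.symm hy]
      · simp
    · rintro _ ⟨g, rfl⟩
      refine ⟨fun q => if q.1 = 0 then g q.2 else 0, ?_⟩
      funext p
      rw [Matrix.mulVecLin_apply, Matrix.mulVec, dotProduct]
      rw [Fintype.sum_prod_type]
      rw [Finset.sum_eq_single (0 : Fin r → ZMod 2)]
      · rw [Finset.sum_eq_single p.2]
        · simp [hM, ι]
        · intro y _ hy
          simp [hM, Ne.symm hy]
        · simp
      · intro u _ hu
        simp [hu]
      · simp
  rw [Matrix.rank, hrange, LinearMap.finrank_range_of_inj hinj,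
    Module.finrank_fintype_fun_eq_card]
  simp
end

section
/- Let r ≥ 2 and let S_2 ⊆ F_2^2 × F_2^r be the set S_2 = {((0,0), 0_r)} ∪ {((0,1), h) : h ∈ F_2^r, h ≠ 0} ∪ {((1,0), 0_r), ((1,1), 0_r)} (the set of columns of the parity-check matrix H_2 built from the extended Hamming code). Let A be the matrix over F_2 with rows and columns indexed by F_2^2 × F_2^r, with A_{x,y} = 1 if x + y ∈ S_2 and 0 otherwise. Then the rank of A over F_2 is at most 2^r + 4. -/
/-- Membership in the generator set `S₂`: the set of columns of the parity-check
matrix `H₂` built from the extended Hamming code. -/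
def inS2 {r : ℕ} (p : (ZMod 2 × ZMod 2) × (Fin r → ZMod 2)) : Prop :=
  (p.1 = (0, 0) ∧ p.2 = 0) ∨ (p.1 = (0, 1) ∧ p.2 ≠ 0) ∨
  (p.1 = (1, 0) ∧ p.2 = 0) ∨ (p.1 = (1, 1) ∧ p.2 = 0)

instance {r : ℕ} (p : (ZMod 2 × ZMod 2) × (Fin r → ZMod 2)) : Decidable (inS2 p) := by
  unfold inS2; infer_instance

/-!
Over `F₂` the indicator of `S₂` is the sum of the indicator of `{(0,1)} × F₂^r` and that of
`F₂^2 × {0}`: the two sets meet exactly in `((0,1), 0)`, the one point missing from `S₂`.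
Hence `A` is the sum of a matrix whose rows depend only on `x.1` (rank `≤ 4`) and one whose
rows depend only on `x.2` (rank `≤ 2^r`).
-/

namespace Matrix

variable {m n K : Type*} [Fintype n]

theorem rank_add_le [Field K] (A B : Matrix m n K) : (A + B).rank ≤ A.rank + B.rank := by
  rw [rank, mulVecLin_add]
  exact (Submodule.finrank_mono (LinearMap.range_add_le _ _)).trans
    (Submodule.finrank_add_le_finrank_add_finrank _ _)

end Matrix

theorem ite_inS2_eq_add {r : ℕ} (p : (ZMod 2 × ZMod 2) × (Fin r → ZMod 2)) :
    (if inS2 p then (1 : ZMod 2) else 0) =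
      (if p.1 = (0, 1) then 1 else 0) + (if p.2 = 0 then 1 else 0) := by
  obtain ⟨c, w⟩ := p
  by_cases hw : w = 0 <;> fin_cases c <;> simp +decide [inS2, hw]

theorem rank_H2_coset_graph_general (r : ℕ)
    (A : Matrix ((ZMod 2 × ZMod 2) × (Fin r → ZMod 2))
         ((ZMod 2 × ZMod 2) × (Fin r → ZMod 2)) (ZMod 2))
    (hA : ∀ x y, A x y = if inS2 (x + y) then 1 else 0) :
    A.rank ≤ 2 ^ r + 4 := by
  set B₁ := Matrix.of fun (c : ZMod 2 × ZMod 2) (y : (ZMod 2 × ZMod 2) × (Fin r → ZMod 2)) =>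
    if c + y.1 = (0, 1) then (1 : ZMod 2) else 0
  set B₂ := Matrix.of fun (w : Fin r → ZMod 2) (y : (ZMod 2 × ZMod 2) × (Fin r → ZMod 2)) =>
    if w + y.2 = 0 then (1 : ZMod 2) else 0
  have hsplit : A = B₁.submatrix Prod.fst id + B₂.submatrix Prod.snd id := by
    ext x y
    simp [hA, ite_inS2_eq_add, B₁, B₂]
  calc A.rank ≤ (B₁.submatrix Prod.fst id).rank + (B₂.submatrix Prod.snd id).rank :=
        hsplit ▸ Matrix.rank_add_le _ _
    _ ≤ B₁.rank + B₂.rank := add_le_add (B₁.rank_submatrix_le _ _) (B₂.rank_submatrix_le _ _)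
    _ ≤ 4 + 2 ^ r := by simpa using add_le_add B₁.rank_le_card_height B₂.rank_le_card_height
    _ = 2 ^ r + 4 := add_comm _ _

theorem rank_H2_coset_graph (r : ℕ) (hr : 2 ≤ r)
    (A : Matrix ((ZMod 2 × ZMod 2) × (Fin r → ZMod 2))
         ((ZMod 2 × ZMod 2) × (Fin r → ZMod 2)) (ZMod 2))
    (hA : ∀ x y, A x y = if inS2 (x + y) then 1 else 0) :
    A.rank ≤ 2 ^ r + 4 :=
  rank_H2_coset_graph_general r A hA
end

section
/- Let r ≥ 2 and let S_2 ⊆ F_2^2 × F_2^r be the set S_2 = {((0,0), 0_r)} ∪ {((0,1), h) : h ∈ F_2^r, h ≠ 0} ∪ {((1,0), 0_r), ((1,1), 0_r)}. Let A be the matrix over F_2 with rows and columns indexed by F_2^2 × F_2^r, with A_{x,y} = 1 if x + y ∈ S_2 and 0 otherwise. Then the dimension over F_2 of the kernel of A (viewed as a linear map on the 2^{r+2}-dimensional space of F_2-valued vectors indexed by F_2^2 × F_2^r) is at least 3·2^r − 4; equivalently, the binary storage code 𝒞_{2,r} = ker(A) has rate at least 3/4 − 2^{−r}. -/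
theorem storage_code_C2r_dim (r : ℕ) (hr : 2 ≤ r)
    (A : Matrix ((ZMod 2 × ZMod 2) × (Fin r → ZMod 2))
         ((ZMod 2 × ZMod 2) × (Fin r → ZMod 2)) (ZMod 2))
    (hA : ∀ x y, A x y = if inS2 (x + y) then 1 else 0) :
    3 * 2 ^ r - 4 ≤ Module.finrank (ZMod 2) (LinearMap.ker A.mulVecLin) := by
  classical
  set f : ((Fin r → ZMod 2) ⊕ (ZMod 2 × ZMod 2)) →
      ((ZMod 2 × ZMod 2) × (Fin r → ZMod 2)) → ZMod 2 :=
    Sum.elim (fun v x => if x.2 = v then 1 else 0)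
      (fun g x => if x.1 = g then 1 else 0) with hf
  have key : ∀ x y : (ZMod 2 × ZMod 2) × (Fin r → ZMod 2),
      (if inS2 (x + y) then (1 : ZMod 2) else 0) =
      (if x.2 = y.2 then 1 else 0) + (if x.1 = y.1 + (0, 1) then 1 else 0) := by
    rintro ⟨⟨a, b⟩, v⟩ ⟨⟨c, d⟩, w⟩
    have hneg : -w = w := by funext i; exact CharTwo.neg_eq _
    have hvw : v + w = 0 ↔ v = w := by rw [add_eq_zero_iff_eq_neg, hneg]
    by_cases hv : v = w
    · subst hv
      have hvv : v + v = 0 := by funext i; exact CharTwo.add_self_eq_zero _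
      simp only [inS2, Prod.mk_add_mk, Prod.mk.injEq, hvv,
        eq_self_iff_true, and_true, ne_eq, not_true_eq_false, and_false, false_or,
        if_true]
      revert a b c d; decide
    · have hvw' : ¬ v + w = 0 := fun h => hv (hvw.mp h)
      simp only [inS2, Prod.mk_add_mk, Prod.mk.injEq, hvw', and_false, false_or,
        ne_eq, not_false_eq_true, and_true, if_neg hv]
      revert a b c d; decide
  have hcol : ∀ y, A.transpose y ∈ Submodule.span (ZMod 2) (Set.range f) := by
    intro y
    have hy : A.transpose y = f (Sum.inl y.2) + f (Sum.inr (y.1 + (0, 1))) := by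
      funext x
      simp only [Matrix.transpose_apply, hA, key x y, hf, Sum.elim_inl, Sum.elim_inr,
        Pi.add_apply]
    rw [hy]
    exact add_mem (Submodule.subset_span ⟨Sum.inl y.2, rfl⟩)
      (Submodule.subset_span ⟨Sum.inr (y.1 + (0, 1)), rfl⟩)
  have hrange : LinearMap.range A.mulVecLin ≤ Submodule.span (ZMod 2) (Set.range f) := by
    rw [Matrix.range_mulVecLin]
    exact Submodule.span_le.mpr (Set.range_subset_iff.mpr hcol)
  have hrank : Module.finrank (ZMod 2) (LinearMap.range A.mulVecLin) ≤ 2 ^ r + 4 := by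
    have h1 : Module.finrank (ZMod 2) (LinearMap.range A.mulVecLin) ≤
        Module.finrank (ZMod 2) (Submodule.span (ZMod 2) (Set.range f)) :=
      Submodule.finrank_mono hrange
    have h2 := finrank_range_le_card (R := ZMod 2) f
    simp only [Set.finrank] at h2
    have hcard : Fintype.card ((Fin r → ZMod 2) ⊕ (ZMod 2 × ZMod 2)) = 2 ^ r + 4 := by
      simp [Fintype.card_sum, Fintype.card_fun]
    omega
  have hrn := LinearMap.finrank_range_add_finrank_ker A.mulVecLin
  have hdom : Module.finrank (ZMod 2)
      (((ZMod 2 × ZMod 2) × (Fin r → ZMod 2)) → ZMod 2) = 4 * 2 ^ r := by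
    rw [Module.finrank_pi (ZMod 2)]
    simp [Fintype.card_prod, Fintype.card_fun]
  rw [hdom] at hrn
  have hp : 4 ≤ 2 ^ r := by
    calc (4 : ℕ) = 2 ^ 2 := rfl
    _ ≤ 2 ^ r := Nat.pow_le_pow_right (by norm_num) hr
  omega
end

section
/- Let r ≥ 2 and let S_3 ⊆ F_2^3 × F_2^r × F_2^r be the set S_3 = {((0,0,0), 0_r, 0_r)} ∪ {((0,0,1), h, 0_r) : h ≠ 0} ∪ {((0,1,0), 0_r, 0_r), ((0,1,1), 0_r, 0_r)} ∪ {((1,0,0), 0_r, h) : h ≠ 0} ∪ {((1,0,1), h, 0_r) : h ≠ 0} ∪ {((1,1,0), 0_r, 0_r), ((1,1,1), 0_r, 0_r)} (the set of columns of the parity-check matrix H_3). Then the simple graph G_3 on vertex set F_2^3 × F_2^r × F_2^r, in which distinct vertices x and y are adjacent if and only if x + y ∈ S_3, is connected and triangle-free (contains no 3-clique). -/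
/-- Membership in the generator set `S₃`: the set of columns of the parity-check
matrix `H₃`. -/
def inS3 {r : ℕ}
    (p : (ZMod 2 × ZMod 2 × ZMod 2) × (Fin r → ZMod 2) × (Fin r → ZMod 2)) : Prop :=
  (p.1 = (0, 0, 0) ∧ p.2.1 = 0 ∧ p.2.2 = 0) ∨
  (p.1 = (0, 0, 1) ∧ p.2.1 ≠ 0 ∧ p.2.2 = 0) ∨
  (p.1 = (0, 1, 0) ∧ p.2.1 = 0 ∧ p.2.2 = 0) ∨
  (p.1 = (0, 1, 1) ∧ p.2.1 = 0 ∧ p.2.2 = 0) ∨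
  (p.1 = (1, 0, 0) ∧ p.2.1 = 0 ∧ p.2.2 ≠ 0) ∨
  (p.1 = (1, 0, 1) ∧ p.2.1 ≠ 0 ∧ p.2.2 = 0) ∨
  (p.1 = (1, 1, 0) ∧ p.2.1 = 0 ∧ p.2.2 = 0) ∨
  (p.1 = (1, 1, 1) ∧ p.2.1 = 0 ∧ p.2.2 = 0)

/-!
`G` is the Cayley graph of the elementary abelian 2-group `F₂³ × F₂ʳ × F₂ʳ` with connection set
`S₃`. It is connected because `S₃` generates the group: for `r ≥ 2` every vector of `F₂ʳ` is a
difference of two nonzero vectors, so `(0, h, 0)` and `(0, 0, h)` are differences of columns, and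
the columns `(t, 0, 0)` span the first factor. A triangle would give nonzero `a, b, a + b ∈ S₃`.
Their first coordinates then form a line of the Fano plane, which meets the line
`{(0,0,1), (1,0,0), (1,0,1)}` in an odd number of points; so one of the two `F₂ʳ`-blocks is
nonzero in exactly one of `a`, `b`, `a + b`, which is absurd.
-/

namespace SimpleGraph

variable {M : Type*} {s : Set M}

lemma addCayley_reachable_add [Add M] (u : M) {g : M} (hg : g ∈ s) :
    (addCayley s).Reachable u (u + g) := by
  by_cases h : u = u + g
  · rw [← h]
  · exact ((addCayley_adj' s _ _).2 ⟨h, g, hg, .inl rfl⟩).reachable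

lemma addCayley_connected_of_closure_eq_top [AddGroup M] (hs : AddSubgroup.closure s = ⊤) :
    (addCayley s).Connected := by
  have key : ∀ d ∈ AddSubgroup.closure s, ∀ u, (addCayley s).Reachable u (u + d) := by
    intro d hd
    induction hd using AddSubgroup.closure_induction with
    | mem g hg => exact fun u => addCayley_reachable_add u hg
    | zero => simp
    | add d e _ _ hd he => exact fun u => add_assoc u d e ▸ (hd u).trans (he _)
    | neg d _ hd => exact fun u => by simpa using (hd (u + -d)).symm
  have : Nonempty M := ⟨0⟩
  exact .mk fun u v => by simpa using key (-u + v) (hs ▸ AddSubgroup.mem_top _) u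

variable [AddCommGroup M] [Module (ZMod 2) M]

lemma addCayley_adj_iff_add_mem {x y : M} : (addCayley s).Adj x y ↔ x ≠ y ∧ x + y ∈ s := by
  simp [addCayley_adj, ZModModule.neg_eq_self, add_comm y x]

lemma eq_addCayley_of_adj_iff {G : SimpleGraph M} (hG : ∀ x y, G.Adj x y ↔ x ≠ y ∧ x + y ∈ s) :
    G = addCayley s := by
  ext x y
  rw [hG, addCayley_adj_iff_add_mem]

lemma addCayley_cliqueFree_three
    (hs : ∀ a ∈ s, ∀ b ∈ s, a + b ∈ s → a = 0 ∨ b = 0 ∨ a + b = 0) :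
    (addCayley s).CliqueFree 3 := by
  classical
  intro c hc
  obtain ⟨x, y, z, hxy, hxz, hyz, -⟩ := is3Clique_iff.1 hc
  rw [addCayley_adj_iff_add_mem] at hxy hxz hyz
  have hsum : (x + y) + (y + z) = x + z := by
    rw [add_assoc, ← add_assoc y, ZModModule.add_self, zero_add]
  have add_ne_zero {a b : M} (h : a ≠ b) : a + b ≠ 0 := by
    rwa [Ne, add_eq_zero_iff_eq_neg, ZModModule.neg_eq_self]
  rcases hs _ hxy.2 _ hyz.2 (hsum ▸ hxz.2) with h | h | h
  · exact add_ne_zero hxy.1 h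
  · exact add_ne_zero hyz.1 h
  · exact add_ne_zero hxz.1 (hsum ▸ h)

end SimpleGraph

local notation "V " r:max => (ZMod 2 × ZMod 2 × ZMod 2) × (Fin r → ZMod 2) × (Fin r → ZMod 2)

def ExactlyOne (p₁ p₂ p₃ : Prop) : Prop :=
  (p₁ ∧ ¬p₂ ∧ ¬p₃) ∨ (¬p₁ ∧ p₂ ∧ ¬p₃) ∨ (¬p₁ ∧ ¬p₂ ∧ p₃)

lemma not_exactlyOne_ne_zero {A : Type*} [AddGroup A] (a b : A) :
    ¬ExactlyOne (a ≠ 0) (b ≠ 0) (a + b ≠ 0) := by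
  unfold ExactlyOne
  rintro (⟨ha, hb, hab⟩ | ⟨ha, hb, hab⟩ | ⟨ha, hb, hab⟩) <;> simp_all

set_option synthInstance.maxSize 1000 in
/-- `{t | t.2 = (0, 1)} ∪ {(1, 0, 0)}` is a line of the Fano plane, and every line
`{t₁, t₂, t₁ + t₂}` meets it in one or three points. -/
lemma fano_exactlyOne (t₁ t₂ : ZMod 2 × ZMod 2 × ZMod 2) (h₁ : t₁ ≠ 0) (h₂ : t₂ ≠ 0)
    (h₃ : t₁ + t₂ ≠ 0) :
    ExactlyOne (t₁.2 = (0, 1)) (t₂.2 = (0, 1)) ((t₁ + t₂).2 = (0, 1)) ∨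
      ExactlyOne (t₁ = (1, 0, 0)) (t₂ = (1, 0, 0)) (t₁ + t₂ = (1, 0, 0)) := by
  revert t₁ t₂
  unfold ExactlyOne
  decide

variable {r : ℕ}

lemma inS3_iff {d : V r} :
    inS3 d ↔ (d.2.1 ≠ 0 ↔ d.1.2 = (0, 1)) ∧ (d.2.2 ≠ 0 ↔ d.1 = (1, 0, 0)) := by
  obtain ⟨⟨a, b, c⟩, u, v⟩ := d
  fin_cases a <;> fin_cases b <;> fin_cases c <;> simp [inS3] <;> tauto

lemma eq_zero_of_inS3_of_fst_eq_zero {d : V r} (hd : inS3 d) (h : d.1 = 0) : d = 0 := by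
  rw [inS3_iff, h] at hd
  simpa [Prod.ext_iff, h] using hd

lemma eq_zero_or_eq_zero_or_add_eq_zero_of_inS3 {d₁ d₂ : V r} (h₁ : inS3 d₁) (h₂ : inS3 d₂)
    (h₃ : inS3 (d₁ + d₂)) : d₁ = 0 ∨ d₂ = 0 ∨ d₁ + d₂ = 0 := by
  by_contra! hne
  have ht₁ := mt (eq_zero_of_inS3_of_fst_eq_zero h₁) hne.1
  have ht₂ := mt (eq_zero_of_inS3_of_fst_eq_zero h₂) hne.2.1
  have ht₃ := mt (eq_zero_of_inS3_of_fst_eq_zero h₃) hne.2.2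
  rw [inS3_iff] at h₁ h₂ h₃
  simp only [Prod.fst_add, Prod.snd_add] at h₃ ht₃
  have hu := not_exactlyOne_ne_zero d₁.2.1 d₂.2.1
  have hv := not_exactlyOne_ne_zero d₁.2.2 d₂.2.2
  rw [h₁.1, h₂.1, h₃.1] at hu
  rw [h₁.2, h₂.2, h₃.2] at hv
  exact (fano_exactlyOne d₁.1 d₂.1 ht₁ ht₂ ht₃).elim hu hv

lemma inS3_or_inS3_add (t : ZMod 2 × ZMod 2 × ZMod 2) :
    inS3 ((t, 0, 0) : V r) ∨ inS3 ((t + (0, 1, 0), 0, 0) : V r) := by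
  simp only [inS3_iff, ne_eq, not_true_eq_false, false_iff]
  revert t
  decide

lemma closure_setOf_inS3_eq_top (hr : 2 ≤ r) : AddSubgroup.closure {d : V r | inS3 d} = ⊤ := by
  set K := AddSubgroup.closure {d : V r | inS3 d}
  have hcard : 3 ≤ ENat.card (Fin r → ZMod 2) := by
    rw [ENat.card_eq_coe_fintype_card]
    simp only [Fintype.card_pi, ZMod.card, Finset.prod_const, Finset.card_univ, Fintype.card_fin]
    exact_mod_cast (show 3 ≤ 2 ^ 2 by norm_num).trans (Nat.pow_le_pow_right two_pos hr)
  have mem {d : V r} (hd : inS3 d) : d ∈ K := AddSubgroup.subset_closure hd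
  have hfst (t) : ((t, 0, 0) : V r) ∈ K := by
    rcases inS3_or_inS3_add t with h | h
    · exact mem h
    · have h010 : inS3 (((0, 1, 0), 0, 0) : V r) := by simp [inS3]
      convert K.sub_mem (mem h) (mem h010) using 1
      simp
  have hu (u) : ((0, u, 0) : V r) ∈ K := by
    obtain ⟨e, he, heu⟩ := ENat.exists_ne_ne_of_three_le hcard 0 u
    have h₁ : inS3 (((0, 0, 1), e - u, 0) : V r) := by
      simp [inS3_iff, sub_eq_zero, heu]
    have h₂ : inS3 (((0, 0, 1), e, 0) : V r) := by simp [inS3_iff, he]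
    convert K.sub_mem (mem h₂) (mem h₁) using 1
    simp
  have hv (v) : ((0, 0, v) : V r) ∈ K := by
    obtain ⟨f, hf, hfv⟩ := ENat.exists_ne_ne_of_three_le hcard 0 v
    have h₁ : inS3 (((1, 0, 0), 0, f - v) : V r) := by
      simp [inS3_iff, sub_eq_zero, hfv]
    have h₂ : inS3 (((1, 0, 0), 0, f) : V r) := by simp [inS3_iff, hf]
    convert K.sub_mem (mem h₂) (mem h₁) using 1
    simp
  refine eq_top_iff.2 fun ⟨t, u, v⟩ _ => ?_
  convert K.add_mem (K.add_mem (hfst t) (hu u)) (hv v) using 1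
  simp

theorem connected_and_triangle_free_G3 (r : ℕ) (hr : 2 ≤ r)
    (G : SimpleGraph ((ZMod 2 × ZMod 2 × ZMod 2) × (Fin r → ZMod 2) × (Fin r → ZMod 2)))
    (hG : ∀ x y, G.Adj x y ↔ x ≠ y ∧ inS3 (x + y)) :
    G.Connected ∧ G.CliqueFree 3 := by
  obtain rfl := SimpleGraph.eq_addCayley_of_adj_iff (s := {d | inS3 d}) hG
  exact ⟨SimpleGraph.addCayley_connected_of_closure_eq_top (closure_setOf_inS3_eq_top hr),
    SimpleGraph.addCayley_cliqueFree_three fun _ ha _ hb hab =>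
      eq_zero_or_eq_zero_or_add_eq_zero_of_inS3 ha hb hab⟩
end

section
/- Let r ≥ 2 and let S_3 ⊆ F_2^3 × F_2^r × F_2^r be the set S_3 = {((0,0,0), 0_r, 0_r)} ∪ {((0,0,1), h, 0_r) : h ≠ 0} ∪ {((0,1,0), 0_r, 0_r), ((0,1,1), 0_r, 0_r)} ∪ {((1,0,0), 0_r, h) : h ≠ 0} ∪ {((1,0,1), h, 0_r) : h ≠ 0} ∪ {((1,1,0), 0_r, 0_r), ((1,1,1), 0_r, 0_r)}. Let A be the matrix over F_2 with rows and columns indexed by F_2^3 × F_2^r × F_2^r, with A_{x,y} = 1 if x + y ∈ S_3 and 0 otherwise. Then the dimension over F_2 of the kernel of A (viewed as a linear map on the 2^{2r+3}-dimensional space of F_2-valued vectors indexed by F_2^3 × F_2^r × F_2^r) is at least 2^{2r+3} − 2^{2r} − 12·2^r; equivalently, the binary storage code 𝒞_{3,r} = ker(A) has rate at least 7/8 − (3/2)·2^{−r}. -/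
instance {r : ℕ}
    (p : (ZMod 2 × ZMod 2 × ZMod 2) × (Fin r → ZMod 2) × (Fin r → ZMod 2)) :
    Decidable (inS3 p) := by
  unfold inS3; infer_instance

open Module

theorem Matrix.rank_add_finrank_ker_mulVecLin {K m n : Type*} [Field K] [Fintype n]
    (A : Matrix m n K) :
    A.rank + finrank K (LinearMap.ker A.mulVecLin) = Fintype.card n := by
  rw [Matrix.rank, LinearMap.finrank_range_add_finrank_ker, Module.finrank_fintype_fun_eq_card]

section TranslateSpan

variable {K G : Type*} [Field K] [AddCommGroup G]

def translateSpan (f : G → K) : Submodule K (G → K) :=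
  Submodule.span K (Set.range fun y x => f (x + y))

theorem translateSpan_add_le (f g : G → K) :
    translateSpan (f + g) ≤ translateSpan f ⊔ translateSpan g :=
  Submodule.span_le.mpr <| by
    rintro _ ⟨y, rfl⟩
    exact Submodule.add_mem _ (Submodule.mem_sup_left (Submodule.subset_span ⟨y, rfl⟩))
      (Submodule.mem_sup_right (Submodule.subset_span ⟨y, rfl⟩))

theorem translateSpan_comp_le_range_funLeft {H : Type*} [AddCommGroup H] (π : G →+ H)
    (g : H → K) : translateSpan (g ∘ π) ≤ LinearMap.range (LinearMap.funLeft K K π) :=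
  Submodule.span_le.mpr <| by
    rintro _ ⟨y, rfl⟩
    exact ⟨fun b => g (b + π y), funext fun x => by simp⟩

theorem finrank_translateSpan_comp_le {H : Type*} [AddCommGroup H] [Fintype H] (π : G →+ H)
    (g : H → K) : finrank K (translateSpan (g ∘ π)) ≤ Fintype.card H :=
  (Submodule.finrank_mono (translateSpan_comp_le_range_funLeft π g)).trans <|
    (LinearMap.finrank_range_le _).trans_eq (Module.finrank_fintype_fun_eq_card K)

variable [Fintype G]

theorem Matrix.rank_eq_finrank_translateSpan {A : Matrix G G K} {f : G → K}
    (hA : ∀ x y, A x y = f (x + y)) : A.rank = finrank K (translateSpan f) := by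
  have hcol : A.col = fun y x => f (x + y) := by
    ext y x
    exact hA x y
  rw [Matrix.rank, Matrix.range_mulVecLin, hcol, translateSpan]

theorem finrank_translateSpan_add_le (f g : G → K) :
    finrank K (translateSpan (f + g)) ≤
      finrank K (translateSpan f) + finrank K (translateSpan g) :=
  (Submodule.finrank_mono (translateSpan_add_le f g)).trans
    (Submodule.finrank_add_le_finrank_add_finrank _ _)

end TranslateSpan

theorem inS3_indicator_eq_sum_comp (r : ℕ) :
    (fun p : (ZMod 2 × ZMod 2 × ZMod 2) × (Fin r → ZMod 2) × (Fin r → ZMod 2) =>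
        if inS3 p then (1 : ZMod 2) else 0) =
      (fun h => if h = 0 then 1 else 0) ∘ AddMonoidHom.snd _ _ +
      (fun q => if q.1 = (0, 1) ∧ q.2 = 0 then 1 else 0) ∘
        (AddMonoidHom.snd _ _).prodMap (AddMonoidHom.snd _ _) +
      (fun q => if q.1 = (1, 0, 0) ∧ q.2 = 0 then 1 else 0) ∘
        (AddMonoidHom.id _).prodMap (AddMonoidHom.fst _ _) := by
  ext ⟨⟨a, b, c⟩, h₁, h₂⟩
  simp only [Pi.add_apply, Function.comp_apply, AddMonoidHom.coe_prodMap, Prod.map_apply,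
    AddMonoidHom.coe_snd, AddMonoidHom.coe_fst, AddMonoidHom.id_apply]
  by_cases h₁0 : h₁ = 0 <;> by_cases h₂0 : h₂ = 0 <;>
    simp only [inS3, h₁0, h₂0, Prod.mk.injEq, Prod.mk_eq_zero, ne_eq, not_true,
      not_false_eq_true, and_true, and_false, or_false] <;> revert a b c <;> decide

theorem storage_code_C3r_dim_general (r : ℕ)
    (A : Matrix ((ZMod 2 × ZMod 2 × ZMod 2) × (Fin r → ZMod 2) × (Fin r → ZMod 2))
         ((ZMod 2 × ZMod 2 × ZMod 2) × (Fin r → ZMod 2) × (Fin r → ZMod 2)) (ZMod 2))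
    (hA : ∀ x y, A x y = if inS3 (x + y) then 1 else 0) :
    2 ^ (2 * r + 3) - 2 ^ (2 * r) - 12 * 2 ^ r ≤
      Module.finrank (ZMod 2) (LinearMap.ker A.mulVecLin) := by
  have hrank : A.rank ≤ 2 ^ r * 2 ^ r + 4 * 2 ^ r + 8 * 2 ^ r := by
    rw [Matrix.rank_eq_finrank_translateSpan (f := fun p => if inS3 p then 1 else 0) hA,
      inS3_indicator_eq_sum_comp]
    refine (finrank_translateSpan_add_le _ _).trans (add_le_add
      ((finrank_translateSpan_add_le _ _).trans (add_le_add ?_ ?_)) ?_) <;>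
      refine (finrank_translateSpan_comp_le _ _).trans_eq ?_ <;> simp
  have hker := A.rank_add_finrank_ker_mulVecLin
  simp only [Fintype.card_prod, Fintype.card_fun, ZMod.card, Fintype.card_fin] at hker
  have hsq : 2 ^ (2 * r) = 2 ^ r * 2 ^ r := by ring
  have hcard : 2 ^ (2 * r + 3) = 8 * (2 ^ r * 2 ^ r) := by ring
  omega

theorem storage_code_C3r_dim (r : ℕ) (hr : 2 ≤ r)
    (A : Matrix ((ZMod 2 × ZMod 2 × ZMod 2) × (Fin r → ZMod 2) × (Fin r → ZMod 2))
         ((ZMod 2 × ZMod 2 × ZMod 2) × (Fin r → ZMod 2) × (Fin r → ZMod 2)) (ZMod 2))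
    (hA : ∀ x y, A x y = if inS3 (x + y) then 1 else 0) :
    2 ^ (2 * r + 3) - 2 ^ (2 * r) - 12 * 2 ^ r ≤
      Module.finrank (ZMod 2) (LinearMap.ker A.mulVecLin) :=
  storage_code_C3r_dim_general r A hA
end
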